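/- For every i ∈ {1, ..., n}, a pair (x, y) ∈ A^2 belongs to the equivalence relation α_i if and only if there exist elements u_0, u_1, ..., u_{2i} ∈ A with u_0 = x and u_{2i} = y such that (u_{j+1}, u_j) ∈ R_j for every j ∈ {0, ..., i−1} and (u_{i+j}, u_{i+j+1}) ∈ R_{i−1−j} for every j ∈ {0, ..., i−1}. (That is, α_i equals the relational composition R_0^{-1} ∘ R_1^{-1} ∘ ⋯ ∘ R_{i−1}^{-1} ∘ R_{i−1} ∘ R_{i−2} ∘ ⋯ ∘ R_1 ∘ R_0.) -/
import Mathlib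


/- The universe `A = {a, 0, 1, ..., n}` of size `n+2` is encoded as `Fin (n+2)`,
where `a` is encoded as `0` and the element `i ∈ {0, ..., n}` is encoded as `i+1`;
this encoding is order-preserving for the order `a < 0 < 1 < ⋯ < n`. -/

/-- The binary relation `R_i = ({a,0,…,i-1} × {a,i}) ∪ {(j,j) : i+1 ≤ j ≤ n}`
(in the encoding: first coordinate has value `≤ i`, second has value `0` or `i+1`;
the diagonal pairs have value `≥ i+2`). -/
def R (n i : ℕ) : Set (Fin (n + 2) × Fin (n + 2)) :=
  {p | (p.1.val ≤ i ∧ (p.2.val = 0 ∨ p.2.val = i + 1)) ∨ (p.1 = p.2 ∧ i + 2 ≤ p.1.val)}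

/-- The equivalence relation `α_i` on `A` with blocks `{a,0,…,i-1}, {i}, {i+1}, …, {n}`. -/
def alphaRel (n i : ℕ) : Set (Fin (n + 2) × Fin (n + 2)) :=
  {p | (p.1.val ≤ i ∧ p.2.val ≤ i) ∨ p.1 = p.2}

lemma mem_R {n i : ℕ} {p q : Fin (n + 2)} :
    (p, q) ∈ R n i ↔ (p.val ≤ i ∧ (q.val = 0 ∨ q.val = i + 1)) ∨ (p = q ∧ i + 2 ≤ p.val) :=
  Iff.rfl

/-- For `i ∈ {1,…,n}`, `α_i` equals the relational composition
`R_0⁻¹ ∘ R_1⁻¹ ∘ ⋯ ∘ R_{i-1}⁻¹ ∘ R_{i-1} ∘ ⋯ ∘ R_1 ∘ R_0`,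
witnessed by a chain `u_0 = x, u_1, …, u_{2i} = y` with
`(u_{j+1}, u_j) ∈ R_j` for `j < i` and `(u_{i+j}, u_{i+j+1}) ∈ R_{i-1-j}` for `j < i`. -/
theorem stmt2 (n m : ℕ) (hm : 2 ≤ m) (i : ℕ) (hi1 : 1 ≤ i) (hi2 : i ≤ n)
    (x y : Fin (n + 2)) :
    (x, y) ∈ alphaRel n i ↔
      ∃ u : ℕ → Fin (n + 2), u 0 = x ∧ u (2 * i) = y ∧
        (∀ j < i, (u (j + 1), u j) ∈ R n j) ∧
        (∀ j < i, (u (i + j), u (i + j + 1)) ∈ R n (i - 1 - j)) := by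
  constructor
  · intro h
    have h' : (x.val ≤ i ∧ y.val ≤ i) ∨ (x = y ∧ i + 1 ≤ x.val) := by
      rcases h with ⟨hx, hy⟩ | heq
      · exact Or.inl ⟨hx, hy⟩
      · have exy : x = y := heq
        by_cases hx : x.val ≤ i
        · exact Or.inl ⟨hx, exy ▸ hx⟩
        · exact Or.inr ⟨exy, by omega⟩
    rcases h' with ⟨hx, hy⟩ | ⟨heq, hge⟩
    · refine ⟨fun j => if j ≤ i then (if j < x.val then x else (0 : Fin (n+2)))
        else (if 2*i - j < y.val then y else (0 : Fin (n+2))), ?_, ?_, ?_, ?_⟩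
      · have h1 : 0 ≤ i := Nat.zero_le i
        simp only [h1, if_true]
        split_ifs with h2
        · rfl
        · apply Fin.ext; simp; omega
      · have h1 : ¬ (2*i ≤ i) := by omega
        simp only [h1, if_false]
        split_ifs with h2
        · rfl
        · apply Fin.ext; simp; omega
      · intro j hj
        have hj1 : j ≤ i := by omega
        have hj2 : j + 1 ≤ i := by omega
        simp only [hj1, hj2, if_true]
        rw [mem_R]
        split_ifs <;> (try simp only [Fin.ext_iff, Fin.val_zero, true_and, and_true, true_or, or_true]) <;> first | trivial | omega
      · intro j hj
        rw [mem_R]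
        by_cases hj0 : j = 0
        · subst hj0
          have h1 : i + 0 ≤ i := le_refl i
          have h2 : ¬ (i + 0 + 1 ≤ i) := by omega
          simp only [h1, if_true, h2, if_false]
          split_ifs <;> (try simp only [Fin.ext_iff, Fin.val_zero, true_and, and_true, true_or, or_true]) <;> first | trivial | omega
        · have h1 : ¬ (i + j ≤ i) := by omega
          have h2 : ¬ (i + j + 1 ≤ i) := by omega
          simp only [h1, h2, if_false]
          split_ifs <;> (try simp only [Fin.ext_iff, Fin.val_zero, true_and, and_true, true_or, or_true]) <;> first | trivial | omega
    · exact ⟨fun _ => x, rfl, heq, fun j hj => Or.inr ⟨rfl, show j + 2 ≤ x.val by omega⟩,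
        fun j hj => Or.inr ⟨rfl, show i - 1 - j + 2 ≤ x.val by omega⟩⟩
  · rintro ⟨u, h0, h2i, hasc, hdesc⟩
    -- forward invariant: u j has small value or equals x
    have P : ∀ j ≤ i, (u j).val ≤ j ∨ u j = x := by
      intro j
      induction j with
      | zero => intro _; right; exact h0
      | succ j ih =>
        intro hj
        rcases mem_R.mp (hasc j (by omega)) with ⟨h1, _⟩ | ⟨heq, hge⟩
        · left; omega
        · rcases ih (by omega) with h | h
          · rw [heq] at hge; omega
          · right; rw [heq, h]
    -- backward invariant from the right end
    have Q : ∀ k ≤ i, (u (2*i - k)).val ≤ k ∨ u (2*i - k) = y := by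
      intro k
      induction k with
      | zero => intro _; right; simpa using h2i
      | succ k ih =>
        intro hk
        have hji : i - k - 1 < i := by omega
        have e1 : i + (i - k - 1) = 2*i - (k + 1) := by omega
        have e2 : i + (i - k - 1) + 1 = 2*i - k := by omega
        have e3 : i - 1 - (i - k - 1) = k := by omega
        have hh := mem_R.mp (hdesc (i - k - 1) hji)
        rw [e2, e1, e3] at hh
        rcases hh with ⟨h1, _⟩ | ⟨heq, hge⟩
        · left; omega
        · rcases ih (by omega) with h | h
          · rw [← heq] at h; omega
          · right; rw [heq, h]
    -- downward invariant: everything left of i is small or equals u i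
    have D : ∀ d ≤ i, (u (i - d)).val ≤ i ∨ u (i - d) = u i := by
      intro d
      induction d with
      | zero => intro _; right; rfl
      | succ d ih =>
        intro hd
        have hji : i - d - 1 < i := by omega
        have e1 : i - d - 1 + 1 = i - d := by omega
        have hh := mem_R.mp (hasc (i - d - 1) hji)
        rw [e1] at hh
        show (u (i - d - 1)).val ≤ i ∨ u (i - d - 1) = u i
        rcases hh with ⟨_, h2⟩ | ⟨heq, _⟩
        · left; omega
        · rw [← heq]
          exact ih (by omega)
    have D' : ∀ d ≤ i, (u (i + d)).val ≤ i ∨ u (i + d) = u i := by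
      intro d
      induction d with
      | zero => intro _; right; rfl
      | succ d ih =>
        intro hd
        rcases mem_R.mp (hdesc d (by omega)) with ⟨_, h2⟩ | ⟨heq, _⟩
        · left
          rw [show i + (d + 1) = i + d + 1 by ring]
          omega
        · rw [show i + (d + 1) = i + d + 1 by ring, ← heq]
          rcases ih (by omega) with h | h
          · left; exact h
          · right; exact h
    by_cases hui : (u i).val ≤ i
    · left
      constructor
      · have hD := D i le_rfl
        rw [Nat.sub_self, h0] at hD
        rcases hD with h | h
        · exact h
        · rw [h]; exact hui
      · have hD := D' i le_rfl
        rw [show i + i = 2*i by ring, h2i] at hD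
        rcases hD with h | h
        · exact h
        · rw [h]; exact hui
    · right
      have hP := P i le_rfl
      have hQ := Q i le_rfl
      rw [Nat.two_mul, Nat.add_sub_cancel] at hQ
      rcases hP with h | h
      · omega
      · rcases hQ with h' | h'
        · omega
        · rw [← h, h']
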